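/- arXiv:2103.00174 — 7 statements merged into one kernel-verified Lean document; each statement's English description precedes it below -/
import Mathlib

section
/- Let X be a set, σ : X → X a bijection, n ≥ 0, and f₀, …, f_n : X → ℝ pairwise distinct functions such that for every index k ∈ {0,…,n} there exists an index l ∈ {0,…,n} with f_k ∘ σ = f_l. Then there exists an n × n integer matrix A that is invertible over ℤ (i.e. a unit in the ring of n × n matrices over ℤ) such that for every x ∈ X and every k ∈ {0,…,n−1}: f_k(σ(x)) − f_n(σ(x)) = Σ_{l=0}^{n−1} A(k,l) · (f_l(x) − f_n(x)). -/
/-!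
An index permutation `τ` with `f k ∘ σ = f (τ k)` exists because precomposition with the
surjection `σ` is injective. Permuting the coordinates of `v : Fin (n + 1) → R` acts on the
differences `v k - v (last n)` by an integer matrix whose rows are differences of two standard
basis vectors; this matrix is multiplicative in the permutation, hence invertible.
-/

open Matrix

theorem Function.Surjective.exists_perm_comp_eq {X ι β : Type*} [Finite ι] {σ : X → X}
    (hσ : σ.Surjective) {f : ι → X → β} (hf : f.Injective) (hinv : ∀ k, ∃ l, f k ∘ σ = f l) :
    ∃ τ : Equiv.Perm ι, ∀ k, f k ∘ σ = f (τ k) := by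
  choose τ hτ using hinv
  have hτ_inj : τ.Injective := fun a b hab ↦
    hf <| hσ.injective_comp_right <| by simp only [hτ, hab]
  exact ⟨Equiv.ofBijective τ (Finite.injective_iff_bijective.1 hτ_inj), hτ⟩

namespace Fin

variable {R : Type*} [CommRing R] {n : ℕ}

def lastDiff (v : Fin (n + 1) → R) : Fin n → R :=
  fun k ↦ v k.castSucc - v (last n)

@[simp]
theorem lastDiff_snoc_zero (w : Fin n → R) : lastDiff (snoc w 0) = w := by
  ext k
  simp [lastDiff]

theorem sum_ite_mul_lastDiff (v : Fin (n + 1) → R) (j : Fin (n + 1)) :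
    ∑ l : Fin n, (if j = l.castSucc then 1 else 0) * lastDiff v l = v j - v (last n) := by
  have h := sum_univ_castSucc fun i ↦ (if j = i then (1 : R) else 0) * (v i - v (last n))
  simpa [lastDiff] using h.symm

variable (R) in
def permDiffMatrix (π : Equiv.Perm (Fin (n + 1))) : Matrix (Fin n) (Fin n) R :=
  fun k l ↦ (if π k.castSucc = l.castSucc then 1 else 0) - (if π (last n) = l.castSucc then 1 else 0)

@[simp]
theorem intCast_permDiffMatrix (π : Equiv.Perm (Fin (n + 1))) (k l : Fin n) :
    ((permDiffMatrix ℤ π k l : ℤ) : R) = permDiffMatrix R π k l := by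
  simp [permDiffMatrix, apply_ite (Int.cast : ℤ → R)]

theorem permDiffMatrix_mulVec_lastDiff (π : Equiv.Perm (Fin (n + 1))) (v : Fin (n + 1) → R) :
    permDiffMatrix R π *ᵥ lastDiff v = lastDiff (v ∘ π) := by
  ext k
  simp only [mulVec, dotProduct, permDiffMatrix, sub_mul, Finset.sum_sub_distrib,
    sum_ite_mul_lastDiff]
  simp only [lastDiff, Function.comp_apply]
  ring

theorem permDiffMatrix_mul (π ρ : Equiv.Perm (Fin (n + 1))) :
    permDiffMatrix R π * permDiffMatrix R ρ = permDiffMatrix R (ρ * π) := by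
  refine ext_of_mulVec_single fun i ↦ ?_
  rw [← lastDiff_snoc_zero (Pi.single i 1), ← mulVec_mulVec]
  simp only [permDiffMatrix_mulVec_lastDiff, Equiv.Perm.coe_mul, Function.comp_assoc]

theorem permDiffMatrix_one : permDiffMatrix R (1 : Equiv.Perm (Fin (n + 1))) = 1 := by
  refine ext_of_mulVec_single fun i ↦ ?_
  rw [← lastDiff_snoc_zero (Pi.single i 1), permDiffMatrix_mulVec_lastDiff, one_mulVec]
  rfl

theorem isUnit_permDiffMatrix (π : Equiv.Perm (Fin (n + 1))) : IsUnit (permDiffMatrix R π) :=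
  ⟨⟨permDiffMatrix R π, permDiffMatrix R π⁻¹,
    by rw [permDiffMatrix_mul, inv_mul_cancel, permDiffMatrix_one],
    by rw [permDiffMatrix_mul, mul_inv_cancel, permDiffMatrix_one]⟩, rfl⟩

end Fin

/-- Proposition 1 of the paper: σ extends through the induced map
`x ↦ (f_k(x) − f_n(x))_{k<n}` to a ℤ-linear transformation of ℝⁿ given by a matrix
invertible over ℤ. -/
theorem stmt_1 {X : Type*} (σ : X → X) (hσ : Function.Bijective σ)
    (n : ℕ) (f : Fin (n + 1) → X → ℝ) (hf : Function.Injective f)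
    (hinv : ∀ k : Fin (n + 1), ∃ l : Fin (n + 1), f k ∘ σ = f l) :
    ∃ A : Matrix (Fin n) (Fin n) ℤ, IsUnit A ∧
      ∀ (x : X) (k : Fin n),
        f (Fin.castSucc k) (σ x) - f (Fin.last n) (σ x) =
          ∑ l : Fin n, (A k l : ℝ) * (f (Fin.castSucc l) x - f (Fin.last n) x) := by
  obtain ⟨τ, hτ⟩ := hσ.surjective.exists_perm_comp_eq hf hinv
  refine ⟨Fin.permDiffMatrix ℤ τ, Fin.isUnit_permDiffMatrix τ, fun x k ↦ ?_⟩
  have h := congrFun (Fin.permDiffMatrix_mulVec_lastDiff τ fun j ↦ f j x) k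
  simpa [Fin.lastDiff, mulVec, dotProduct, ← hτ] using h.symm
end

section
/- Let X be a set, σ : X → X a bijection, n ≥ 0, and f₀, …, f_n : X → ℝ pairwise distinct functions such that for every index k ∈ {0,…,n} there exists an index l ∈ {0,…,n} with f_k ∘ σ = f_l. Then there exists a permutation τ of {0,…,n} such that for every x ∈ X there exists c ∈ ℝ with, for all k, the k-th entry of the tropical matrix–vector product P_τ ⊙ (trop(f₀(x)),…,trop(f_n(x))) equal to trop(c) ⊙ trop(f_k(σ(x))), where P_τ is the permutation matrix of τ over T (tropical one 0 at positions (k, τ(k)) and tropical zero −∞ elsewhere). -/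
/-- Max-plus tropical matrix–vector product over `T = WithBot ℝ = ℝ ∪ {−∞}`:
tropical addition is `max` (`⊔`, with `⊥ = −∞` the tropical zero) and tropical
multiplication is ordinary addition (with `⊥` absorbing). -/
def tropMulVec {n : ℕ} (M : Fin n → Fin n → WithBot ℝ) (v : Fin n → WithBot ℝ) :
    Fin n → WithBot ℝ :=
  fun k => Finset.univ.sup fun l => M k l + v l

/-- The tropical permutation matrix of `τ`: tropical one `0` at positions `(k, τ k)`
and tropical zero `−∞ = ⊥` elsewhere. -/
def tropPermMat {n : ℕ} (τ : Equiv.Perm (Fin n)) : Fin n → Fin n → WithBot ℝ :=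
  fun k l => if l = τ k then (0 : WithBot ℝ) else ⊥

theorem tropMulVec_tropPermMat {n : ℕ} (τ : Equiv.Perm (Fin n)) (v : Fin n → WithBot ℝ)
    (k : Fin n) : tropMulVec (tropPermMat τ) v k = v (τ k) := by
  refine le_antisymm (Finset.sup_le fun l _ => ?_) ?_
  · unfold tropPermMat
    split_ifs with h <;> simp [h]
  · simpa [tropMulVec, tropPermMat] using
      Finset.le_sup (f := fun l => tropPermMat τ k l + v l) (Finset.mem_univ (τ k))

/- Since `σ` is surjective, precomposition with `σ` is injective, so `k ↦ l` is injective on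
the finite index set and hence a permutation. -/
theorem exists_perm_apply_eq_comp {ι X Y : Type*} [Finite ι] {σ : X → X}
    (hσ : Function.Surjective σ) {f : ι → X → Y} (hf : Function.Injective f)
    (hinv : ∀ k, ∃ l, f k ∘ σ = f l) : ∃ τ : Equiv.Perm ι, ∀ k, f (τ k) = f k ∘ σ := by
  choose g hg using hinv
  have hg_inj : Function.Injective g := fun k k' h =>
    hf <| hσ.injective_comp_right <| by simp only [hg, h]
  exact ⟨Equiv.ofBijective g (Finite.injective_iff_bijective.mp hg_inj), fun k => (hg k).symm⟩

/-- Proposition 2 of the paper: σ extends to a permutation matrix in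
`PGL_trop(n+1, T)`, i.e. the permutation matrix maps the tropical coordinate vector of
`x` to that of `σ x` up to a tropical scalar. -/
theorem stmt_2 {X : Type*} (σ : X → X) (hσ : Function.Bijective σ)
    (n : ℕ) (f : Fin (n + 1) → X → ℝ) (hf : Function.Injective f)
    (hinv : ∀ k : Fin (n + 1), ∃ l : Fin (n + 1), f k ∘ σ = f l) :
    ∃ τ : Equiv.Perm (Fin (n + 1)), ∀ x : X, ∃ c : ℝ, ∀ k : Fin (n + 1),
      tropMulVec (tropPermMat τ) (fun l => ((f l x : ℝ) : WithBot ℝ)) k =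
        (c : WithBot ℝ) + ((f k (σ x) : ℝ) : WithBot ℝ) := by
  obtain ⟨τ, hτ⟩ := exists_perm_apply_eq_comp hσ.surjective hf hinv
  refine ⟨τ, fun x => ⟨0, fun k => ?_⟩⟩
  rw [tropMulVec_tropPermMat, hτ]
  simp
end

section
/- For every n ≥ 0 and all permutations τ, τ′ of {0,…,n}: A_{τ ∘ τ′} = A_{τ′} · A_τ (product of integer matrices). In particular A_{id} = I, so τ ↦ A_τ is a group antihomomorphism from the symmetric group on {0,…,n} to the group of invertible n × n integer matrices. -/
/-- The integer matrix `A_τ` from the proof of Proposition 1 of the paper: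
`A_τ(k,l) = [τ(k) = l] − [τ(n) = l]` for `k, l ∈ {0,…,n−1}` regarded inside `{0,…,n}`. -/
def Amat {n : ℕ} (τ : Equiv.Perm (Fin (n + 1))) : Matrix (Fin n) (Fin n) ℤ :=
  Matrix.of fun k l =>
    (if τ (Fin.castSucc k) = Fin.castSucc l then (1 : ℤ) else 0) -
      (if τ (Fin.last n) = Fin.castSucc l then (1 : ℤ) else 0)

/-!
Row `k` of `A_τ` lists the coordinates of `e_{τ k} - e_{τ n}` in the basis `e_k - e_n` (`k < n`) of
the sum-zero sublattice of `ℤ^{n+1}`, so `τ ↦ A_τ` is the action of the symmetric group on that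
lattice written with row vectors, hence an antihomomorphism. Concretely, extending the rows of `A_τ`
to all `x ∈ {0,…,n}` by the same formula gives a zero row at `x = n`; so the sum in the matrix
product may run over all of `{0,…,n}`, where it telescopes.
-/

open Finset

theorem sum_sub_ite_mul_eq_sub {α R : Type*} [Fintype α] [DecidableEq α] [Ring R] (a b : α)
    (c : α → R) :
    ∑ x, ((if a = x then (1 : R) else 0) - (if b = x then 1 else 0)) * c x = c a - c b := by
  simp only [sub_mul, ite_mul, one_mul, zero_mul, sum_sub_distrib, sum_ite_eq, mem_univ, if_true]

namespace Amat

variable {n : ℕ}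

def extRow (τ : Equiv.Perm (Fin (n + 1))) (x : Fin (n + 1)) (l : Fin n) : ℤ :=
  (if τ x = Fin.castSucc l then 1 else 0) - (if τ (Fin.last n) = Fin.castSucc l then 1 else 0)

theorem extRow_last (τ : Equiv.Perm (Fin (n + 1))) (l : Fin n) : extRow τ (Fin.last n) l = 0 :=
  sub_self _

theorem extRow_mul (τ τ' : Equiv.Perm (Fin (n + 1))) (x : Fin (n + 1)) (l : Fin n) :
    extRow (τ * τ') x l = extRow τ (τ' x) l - extRow τ (τ' (Fin.last n)) l := by
  simp only [extRow, Equiv.Perm.mul_apply]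
  abel

theorem mul (τ τ' : Equiv.Perm (Fin (n + 1))) : Amat (τ * τ') = Amat τ' * Amat τ := by
  ext k l
  symm
  calc (Amat τ' * Amat τ) k l
      = ∑ x, ((if τ' (Fin.castSucc k) = x then (1 : ℤ) else 0) -
          (if τ' (Fin.last n) = x then 1 else 0)) * extRow τ x l := by
        rw [Fin.sum_univ_castSucc, extRow_last, mul_zero, add_zero]
        rfl
    _ = extRow τ (τ' (Fin.castSucc k)) l - extRow τ (τ' (Fin.last n)) l :=
        sum_sub_ite_mul_eq_sub _ _ _
    _ = Amat (τ * τ') k l := (extRow_mul τ τ' _ l).symm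

theorem one : Amat (1 : Equiv.Perm (Fin (n + 1))) = 1 := by
  ext k l
  have hlast : Fin.last n ≠ Fin.castSucc l := (Fin.castSucc_lt_last l).ne'
  simp [Amat, Matrix.one_apply, hlast]

end Amat

/-- `τ ↦ A_τ` is a group antihomomorphism: `A_{τ ∘ τ′} = A_{τ′} · A_τ`
(note that `(τ * τ') k = τ (τ' k)`, i.e. `τ * τ' = τ ∘ τ'`), and `A_id = I`. -/
theorem stmt_6 (n : ℕ) (τ τ' : Equiv.Perm (Fin (n + 1))) :
    Amat (τ * τ') = Amat τ' * Amat τ ∧ Amat (1 : Equiv.Perm (Fin (n + 1))) = 1 :=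
  ⟨Amat.mul τ τ', Amat.one⟩
end

section
/- For every n ≥ 0 and every permutation τ of {0,…,n}: if A_τ is the n × n identity matrix, then τ is the identity permutation. Hence the assignment τ ↦ A_τ is injective on the symmetric group of {0,…,n}. -/
theorem Fin.eq_of_forall_eq_castSucc_iff {n : ℕ} {y z : Fin (n + 1)}
    (h : ∀ l : Fin n, y = l.castSucc ↔ z = l.castSucc) : y = z := by
  induction y using Fin.lastCases with
  | last =>
    induction z using Fin.lastCases with
    | last => rfl
    | cast j => exact absurd ((h j).2 rfl) (Fin.castSucc_lt_last j).ne'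
  | cast i => exact ((h i).1 rfl).symm

theorem Equiv.sum_ite_apply_eq {α R : Type*} [Fintype α] [DecidableEq α] [AddCommMonoidWithOne R]
    (e : α ≃ α) (y : α) : ∑ x, (if e x = y then (1 : R) else 0) = 1 := by
  rw [e.sum_comp (fun x => if x = y then (1 : R) else 0)]
  simp

theorem iff_of_ite_one_zero_eq {R : Type*} [Zero R] [One R] [NeZero (1 : R)] {p q : Prop}
    [Decidable p] [Decidable q] (h : (if p then (1 : R) else 0) = if q then 1 else 0) : p ↔ q := by
  split_ifs at h <;> simp_all

theorem sum_Amat_apply {n : ℕ} (τ : Equiv.Perm (Fin (n + 1))) (l : Fin n) :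
    ∑ k, Amat τ k l = 1 - (n + 1) * if τ (Fin.last n) = l.castSucc then 1 else 0 := by
  have h := τ.sum_ite_apply_eq (R := ℤ) l.castSucc
  rw [Fin.sum_univ_castSucc] at h
  simp only [Amat, Matrix.of_apply, Finset.sum_sub_distrib, Finset.sum_const, Finset.card_univ,
    Fintype.card_fin, nsmul_eq_mul]
  linarith

theorem Amat_one {n : ℕ} : Amat (1 : Equiv.Perm (Fin (n + 1))) = 1 := by
  ext k l
  simp [Amat, Matrix.one_apply, (Fin.castSucc_lt_last l).ne']

theorem Amat_injective {n : ℕ} : Function.Injective (Amat : Equiv.Perm (Fin (n + 1)) → _) := by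
  intro τ σ h
  have h_last (l : Fin n) : τ (Fin.last n) = l.castSucc ↔ σ (Fin.last n) = l.castSucc := by
    have h_sum := sum_Amat_apply τ l
    rw [h, sum_Amat_apply σ l] at h_sum
    exact iff_of_ite_one_zero_eq (mul_left_cancel₀ (by positivity) (sub_right_injective h_sum)).symm
  have h_castSucc (k l : Fin n) :
      τ k.castSucc = l.castSucc ↔ σ k.castSucc = l.castSucc := by
    have h_entry := congrFun₂ h k l
    simp only [Amat, Matrix.of_apply, h_last l, sub_left_inj] at h_entry
    exact iff_of_ite_one_zero_eq h_entry
  ext1 x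
  apply Fin.eq_of_forall_eq_castSucc_iff
  induction x using Fin.lastCases with
  | last => exact h_last
  | cast k => exact h_castSucc k

/-- if `A_τ` is the identity matrix then `τ` is the identity permutation;
hence `τ ↦ A_τ` is injective. -/
theorem stmt_7 (n : ℕ) :
    (∀ τ : Equiv.Perm (Fin (n + 1)), Amat τ = 1 → τ = 1) ∧
      Function.Injective (fun τ : Equiv.Perm (Fin (n + 1)) => Amat τ) :=
  ⟨fun _ hτ => Amat_injective (hτ.trans Amat_one.symm), Amat_injective⟩
end

section
/- Let G be a group acting faithfully on a set X, n ≥ 0, and f₀,…,f_n : X → ℝ pairwise distinct functions forming a G-invariant family. Assume the map φ : X → ℝⁿ defined by φ(x) = (f_k(x) − f_n(x))_{k=0,…,n−1} is injective. Then there exists an injective group homomorphism Ψ from G to the group GL(n, ℤ) of invertible n × n integer matrices such that for every σ ∈ G, every x ∈ X, and every k ∈ {0,…,n−1}: f_k(σ·x) − f_n(σ·x) = Σ_{l=0}^{n−1} Ψ(σ)(k,l) · (f_l(x) − f_n(x)). -/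
/-!
Since the `f k` are pairwise distinct, the permutation `τ σ` with `f k (σ • x) = f (τ σ k) x` is
unique, so `σ ↦ τ σ` reverses products. Precomposition with a permutation acts on the differences
`v k - v n` through an integer matrix, and this again reverses products; the composite is a
homomorphism `G → GL(n, ℤ)` compatible with `φ`. Equal images of `σ, σ'` give `φ (σ • x) = φ (σ' • x)`,
hence `σ • x = σ' • x` for all `x`, and `σ = σ'` by faithfulness.
-/

open Equiv Function
open scoped Matrix

section ReducedPermMatrix

variable {R : Type*} [CommRing R] {n : ℕ}

def subLast (v : Fin (n + 1) → R) : Fin n → R := fun k => v k.castSucc - v (Fin.last n)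

lemma subLast_surjective : Surjective (subLast : (Fin (n + 1) → R) → Fin n → R) :=
  fun w => ⟨Fin.snoc w 0, funext fun k => by simp [subLast]⟩

lemma sum_ite_castSucc_mul {w : Fin (n + 1) → R} (hw : w (Fin.last n) = 0) (j : Fin (n + 1)) :
    ∑ l : Fin n, (if j = l.castSucc then 1 else 0) * w l.castSucc = w j := by
  have := Fin.sum_univ_castSucc fun i => (if j = i then (1 : R) else 0) * w i
  simpa [hw] using this.symm

-- The matrix of `v ↦ v ∘ π` on `R^(n+1)` modulo constants, in the coordinates `subLast`.
def reducedPermMatrix (π : Perm (Fin (n + 1))) : Matrix (Fin n) (Fin n) ℤ :=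
  fun k l => (if π k.castSucc = l.castSucc then 1 else 0) -
    (if π (Fin.last n) = l.castSucc then 1 else 0)

lemma reducedPermMatrix_mulVec_subLast (π : Perm (Fin (n + 1))) (v : Fin (n + 1) → R) :
    (reducedPermMatrix π).map (Int.cast : ℤ → R) *ᵥ subLast v = subLast (v ∘ π) := by
  ext k
  have hw : v (Fin.last n) - v (Fin.last n) = 0 := sub_self _
  simp only [Matrix.mulVec, dotProduct, Matrix.map_apply, reducedPermMatrix, subLast,
    Int.cast_sub, apply_ite (Int.cast : ℤ → R), Int.cast_one, Int.cast_zero, sub_mul,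
    Finset.sum_sub_distrib, sum_ite_castSucc_mul (w := fun j => v j - v (Fin.last n)) hw,
    comp_apply]
  ring

lemma reducedPermMatrix_one : reducedPermMatrix (1 : Perm (Fin (n + 1))) = 1 := by
  ext k l
  simp [reducedPermMatrix, Matrix.one_apply, (Fin.castSucc_lt_last l).ne']

lemma reducedPermMatrix_mul (a b : Perm (Fin (n + 1))) :
    reducedPermMatrix (a * b) = reducedPermMatrix b * reducedPermMatrix a := by
  have key (π : Perm (Fin (n + 1))) (v : Fin (n + 1) → ℤ) :
      reducedPermMatrix π *ᵥ subLast v = subLast (v ∘ π) :=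
    reducedPermMatrix_mulVec_subLast π v
  refine Matrix.ext_iff_mulVec.2 fun w => ?_
  obtain ⟨v, rfl⟩ := subLast_surjective w
  rw [← Matrix.mulVec_mulVec, key, key, key]
  rfl

def reducedPermMatrixHom : (Perm (Fin (n + 1)))ᵐᵒᵖ →* Matrix (Fin n) (Fin n) ℤ where
  toFun π := reducedPermMatrix π.unop
  map_one' := reducedPermMatrix_one
  map_mul' a b := reducedPermMatrix_mul b.unop a.unop

end ReducedPermMatrix

lemma exists_hom_perm_of_injective {G X ι Y : Type*} [Group G] [MulAction G X]
    {f : ι → X → Y} (hf : Injective f)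
    (hinv : ∀ σ : G, ∃ τ : Perm ι, ∀ k x, f k (σ • x) = f (τ k) x) :
    ∃ τ : G →* (Perm ι)ᵐᵒᵖ, ∀ σ k x, f k (σ • x) = f ((τ σ).unop k) x := by
  choose τ hτ using hinv
  have eq_of_forall {σ : G} {π : Perm ι} (hπ : ∀ k x, f k (σ • x) = f (π k) x) : π = τ σ :=
    Equiv.ext fun k => hf <| funext fun x => by rw [← hπ, hτ]
  refine ⟨{ toFun σ := .op (τ σ), map_one' := ?_, map_mul' := fun σ₁ σ₂ => ?_ }, hτ⟩
  · exact congrArg _ (eq_of_forall fun k x => by simp).symm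
  · refine congrArg _ (eq_of_forall fun k x => ?_).symm
    rw [mul_smul, hτ, hτ]
    rfl

/-- Theorem 7 of the paper: a group acting faithfully with a G-invariant
family of pairwise distinct functions inducing an injective map `φ : X → ℝⁿ` embeds into
`GL(n, ℤ)` compatibly with `φ`. -/
theorem stmt_8 {G X : Type*} [Group G] [MulAction G X] [FaithfulSMul G X]
    (n : ℕ) (f : Fin (n + 1) → X → ℝ) (hf : Function.Injective f)
    (hinv : ∀ σ : G, ∃ τ : Equiv.Perm (Fin (n + 1)),
      ∀ (k : Fin (n + 1)) (x : X), f k (σ • x) = f (τ k) x)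
    (hφ : Function.Injective fun x : X =>
      fun k : Fin n => f (Fin.castSucc k) x - f (Fin.last n) x) :
    ∃ Ψ : G →* (Matrix (Fin n) (Fin n) ℤ)ˣ, Function.Injective Ψ ∧
      ∀ (σ : G) (x : X) (k : Fin n),
        f (Fin.castSucc k) (σ • x) - f (Fin.last n) (σ • x) =
          ∑ l : Fin n, (((Ψ σ : Matrix (Fin n) (Fin n) ℤ)) k l : ℝ) *
            (f (Fin.castSucc l) x - f (Fin.last n) x) := by
  obtain ⟨τ, hτ⟩ := exists_hom_perm_of_injective hf hinv
  let Ψ := (reducedPermMatrixHom.comp τ).toHomUnits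
  have compat (σ : G) (x : X) : subLast (fun k => f k (σ • x)) =
      (Ψ σ : Matrix (Fin n) (Fin n) ℤ).map Int.cast *ᵥ subLast (fun k => f k x) := by
    rw [show (fun k => f k (σ • x)) = (fun k => f k x) ∘ (τ σ).unop from funext (hτ σ · x)]
    exact (reducedPermMatrix_mulVec_subLast _ _).symm
  refine ⟨Ψ, fun σ σ' h => eq_of_smul_eq_smul fun x => hφ ?_, fun σ x k => congrFun (compat σ x) k⟩
  change subLast (fun k => f k (σ • x)) = subLast (fun k => f k (σ' • x))
  rw [compat, compat, h]
end

section
/- Let G be a group acting faithfully on a set X, n ≥ 0, and f₀,…,f_n : X → ℝ pairwise distinct functions forming a G-invariant family. Assume the map φ : X → ℝⁿ defined by φ(x) = (f_k(x) − f_n(x))_{k=0,…,n−1} is injective. Then there exists an injective group homomorphism Ψ from G to the symmetric group on {0,…,n} such that for every σ ∈ G and every x ∈ X there exists c ∈ ℝ with f_{Ψ(σ)(k)}(σ·x) = c + f_k(x) for all k ∈ {0,…,n}; equivalently, the permutation matrix of Ψ(σ) over the max-plus tropical semiring T maps the tropical coordinate vector (trop(f₀(σ·x)),…,trop(f_n(σ·x)))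 to (trop(f₀(x)),…,trop(f_n(x))) up to a tropical scalar. -/
/-!
Let `G` act on functions `X → β` by `(σ • g) x = g (σ⁻¹ • x)`. Invariance of the family says
that the set `{f₀, …, fₙ}` is stable under this action, and since the `f k` are pairwise distinct
the action on that set transports to an action of `G` on the indices. Its permutation
representation is the required `Ψ`, with scalar `c = 0`. It is injective because `φ` factors
through `x ↦ (f₀ x, …, fₙ x)`, so the `f k` separate points, and an element acting trivially on
the indices therefore acts trivially on `X`.
-/

open Function

namespace FamilyAction

variable {G X β ι : Type*} [Group G] [MulAction G X]

attribute [local instance] arrowAction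

def subMulAction (f : ι → X → β) (hinv : ∀ (σ : G) (k : ι), ∃ l, ∀ x, f k (σ • x) = f l x) :
    SubMulAction G (X → β) where
  carrier := Set.range f
  smul_mem' σ := by
    rintro _ ⟨k, rfl⟩
    obtain ⟨l, hl⟩ := hinv σ⁻¹ k
    exact ⟨l, funext fun x => (hl x).symm⟩

variable {f : ι → X → β} (hf : Injective f)
  (hinv : ∀ (σ : G) (k : ι), ∃ l, ∀ x, f k (σ • x) = f l x)

noncomputable abbrev indexAction : MulAction G ι :=
  Equiv.mulAction G (β := subMulAction f hinv) (Equiv.ofInjective f hf)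

lemma indexAction_apply (σ : G) (k : ι) (x : X) :
    letI := indexAction hf hinv
    f (σ • k) x = f k (σ⁻¹ • x) := by
  let e : ι ≃ subMulAction f hinv := Equiv.ofInjective f hf
  exact congrFun (Equiv.apply_ofInjective_symm hf (σ • e k)) x

lemma faithfulSMul_indexAction [FaithfulSMul G X] (hsep : Injective fun x k => f k x) :
    letI := indexAction hf hinv
    FaithfulSMul G ι := by
  let := indexAction hf hinv
  refine ⟨fun {σ ρ} h => inv_injective (eq_of_smul_eq_smul (α := X) fun x => hsep ?_)⟩
  funext k
  simpa only [indexAction_apply] using congrFun (congrArg f (h k)) x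

end FamilyAction

/-- Theorem 8 of the paper: a group acting faithfully with a G-invariant
family of pairwise distinct functions inducing an injective map `φ : X → ℝⁿ` embeds into
the symmetric group on `{0,…,n}` (i.e. into `PGL_trop(n+1, T)` by permutation matrices),
compatibly with the induced rational map up to a tropical scalar `c`. -/
theorem stmt_9 {G X : Type*} [Group G] [MulAction G X] [FaithfulSMul G X]
    (n : ℕ) (f : Fin (n + 1) → X → ℝ) (hf : Function.Injective f)
    (hinv : ∀ σ : G, ∃ τ : Equiv.Perm (Fin (n + 1)),
      ∀ (k : Fin (n + 1)) (x : X), f k (σ • x) = f (τ k) x)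
    (hφ : Function.Injective fun x : X =>
      fun k : Fin n => f (Fin.castSucc k) x - f (Fin.last n) x) :
    ∃ Ψ : G →* Equiv.Perm (Fin (n + 1)), Function.Injective Ψ ∧
      ∀ (σ : G) (x : X), ∃ c : ℝ, ∀ k : Fin (n + 1),
        f (Ψ σ k) (σ • x) = c + f k x := by
  have hinv' : ∀ (σ : G) k, ∃ l, ∀ x, f k (σ • x) = f l x := fun σ k =>
    (hinv σ).elim fun τ hτ => ⟨τ k, hτ k⟩
  have hsep : Injective fun x k => f k x :=
    hφ.of_comp (f := fun v k => v (Fin.castSucc k) - v (Fin.last n))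
  let := FamilyAction.indexAction hf hinv'
  have := FamilyAction.faithfulSMul_indexAction hf hinv' hsep
  refine ⟨MulAction.toPermHom G _, MulAction.toPerm_injective, fun σ x => ⟨0, fun k => ?_⟩⟩
  rw [MulAction.toPermHom_apply, MulAction.toPerm_apply, FamilyAction.indexAction_apply hf hinv',
    inv_smul_smul, zero_add]
end

section
/- Let G be a group acting faithfully on a set X, n ≥ 0, and f₀,…,f_n : X → ℝ pairwise distinct functions forming a G-invariant family. Assume the map φ : X → ℝⁿ defined by φ(x) = (f_k(x) − f_n(x))_{k=0,…,n−1} is injective. Then there exists an injective group homomorphism Ψ from G to the symmetric group on {0,…,n} such that f_{Ψ(σ)(k)}(σ·x) = f_k(x) for every σ ∈ G, every x ∈ X, and every k ∈ {0,…,n}; equivalently, for each σ the permutation matrix of Ψ(σ) over the max-plus tropical semiring T sends the vector (trop(f₀(σ·x)),…,trop(f_n(σ·x))) exactly to (trop(f₀(x)),…,trop(f_n(x))). -/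
/-!
Since the `f k` are pairwise distinct, the permutation of indices realising the invariance under
a given `σ` is unique, and uniqueness turns the choice `σ ↦ τ_σ` into a homomorphism. An element
of its kernel preserves every value `f k x`, hence every coordinate of `φ`; by injectivity of `φ`
it fixes every point, so it is trivial since the action is faithful.
-/

open Function Equiv

section Relabeling

variable {G X Y ι : Type*} [Group G] [MulAction G X]

def IsRelabeling (f : ι → X → Y) (σ : G) (τ : Perm ι) : Prop :=
  ∀ x k, f (τ k) (σ • x) = f k x

namespace IsRelabeling

variable {f : ι → X → Y} {σ σ' : G} {τ τ' : Perm ι}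

theorem of_apply_smul_eq (h : ∀ k x, f k (σ • x) = f (τ k) x) : IsRelabeling f σ τ⁻¹ :=
  fun x k => by rw [h, ← Perm.mul_apply, mul_inv_cancel, Perm.one_apply]

theorem mul (h : IsRelabeling f σ τ) (h' : IsRelabeling f σ' τ') :
    IsRelabeling f (σ * σ') (τ * τ') :=
  fun x k => by rw [Perm.mul_apply, mul_smul, h, h']

theorem unique (hf : Injective f) (h : IsRelabeling f σ τ) (h' : IsRelabeling f σ τ') :
    τ = τ' :=
  Equiv.ext fun k => hf <| funext fun y => by rw [← smul_inv_smul σ y, h, h']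

theorem smul_eq_self (hX : Injective fun x k => f k x) (h : IsRelabeling f σ 1) (x : X) :
    σ • x = x :=
  hX <| funext (h x)

end IsRelabeling

section RelabelingHom

variable {f : ι → X → Y} (hf : Injective f) (h : ∀ σ : G, ∃ τ, IsRelabeling f σ τ)

noncomputable def relabelingHom : G →* Perm ι :=
  MonoidHom.mk' (fun σ => (h σ).choose) fun σ σ' =>
    (h _).choose_spec.unique hf ((h σ).choose_spec.mul (h σ').choose_spec)

theorem isRelabeling_relabelingHom (σ : G) : IsRelabeling f σ (relabelingHom hf h σ) :=
  (h σ).choose_spec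

theorem relabelingHom_injective [FaithfulSMul G X] (hX : Injective fun x k => f k x) :
    Injective (relabelingHom hf h) := by
  rw [injective_iff_map_eq_one]
  intro σ hσ
  have hrel := isRelabeling_relabelingHom hf h σ
  rw [hσ] at hrel
  exact FaithfulSMul.eq_of_smul_eq_smul fun x : X => by rw [hrel.smul_eq_self hX, one_smul]

end RelabelingHom

end Relabeling

theorem injective_eval_of_injective_sub_last {X : Type*} {n : ℕ} {f : Fin (n + 1) → X → ℝ}
    (hφ : Injective fun x : X => fun k : Fin n => f (Fin.castSucc k) x - f (Fin.last n) x) :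
    Injective fun x k => f k x :=
  Injective.of_comp (f := fun (v : Fin (n + 1) → ℝ) (k : Fin n) => v k.castSucc - v (Fin.last n)) hφ

/-- Theorem 9 of the paper: a group acting faithfully with a G-invariant
family of pairwise distinct functions inducing an injective map `φ : X → ℝⁿ` embeds into
the symmetric group on `{0,…,n}` (i.e. into `GL_trop(n+1, T)` by permutation matrices),
compatibly with the induced map, exactly (with no tropical scalar). -/
theorem stmt_10 {G X : Type*} [Group G] [MulAction G X] [FaithfulSMul G X]
    (n : ℕ) (f : Fin (n + 1) → X → ℝ) (hf : Function.Injective f)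
    (hinv : ∀ σ : G, ∃ τ : Equiv.Perm (Fin (n + 1)),
      ∀ (k : Fin (n + 1)) (x : X), f k (σ • x) = f (τ k) x)
    (hφ : Function.Injective fun x : X =>
      fun k : Fin n => f (Fin.castSucc k) x - f (Fin.last n) x) :
    ∃ Ψ : G →* Equiv.Perm (Fin (n + 1)), Function.Injective Ψ ∧
      ∀ (σ : G) (x : X) (k : Fin (n + 1)), f (Ψ σ k) (σ • x) = f k x := by
  have hrel (σ : G) : ∃ τ, IsRelabeling f σ τ :=
    let ⟨_, hτ⟩ := hinv σ
    ⟨_, IsRelabeling.of_apply_smul_eq hτ⟩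
  exact ⟨relabelingHom hf hrel,
    relabelingHom_injective hf hrel (injective_eval_of_injective_sub_last hφ),
    fun σ => isRelabeling_relabelingHom hf hrel σ⟩
end
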